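/- arXiv:1302.1031 — 2 statements merged into one kernel-verified Lean document; each statement's English description precedes it below -/
import Mathlib

section
/- Let n₁, n₂, p, q be positive integers with n₁ + n₂ ≤ p and n₁ + n₂ ≤ q. Suppose A, A' ∈ M_{p,n₁}(ℂ) and C, C' ∈ M_{q,n₁}(ℂ) have rank n₁, and B, B' ∈ M_{p,n₂}(ℂ) and D, D' ∈ M_{q,n₂}(ℂ) have rank n₂, and suppose A·Cᵀ = A'·C'ᵀ and D·Bᵀ = D'·B'ᵀ. Then there exists a unique pair (g, h) of invertible complex matrices of sizes n₁×n₁ and n₂×n₂ such that A' = A·g, C' = C·(g⁻¹)ᵀ, B' = B·h, and D' = D·(h⁻¹)ᵀ. -/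
/-!
A matrix of full column rank has a left inverse. From `A Cᵀ = A' C'ᵀ`, a left inverse of `C'`
gives `A' = A g` and a left inverse of `A'` gives `C' = C k`; then `A Cᵀ = A (g kᵀ) Cᵀ`, and
cancelling `A` on the left and `Cᵀ` on the right forces `g kᵀ = 1`. Uniqueness of `g` is the
left-cancellability of `A`. The `(B, D)` block is the same statement applied to the transposed
relation `B Dᵀ = B' D'ᵀ`.
-/

open Matrix

namespace Matrix

variable {K m m' n n' : Type*} [Field K] [Fintype m'] [Fintype n] [DecidableEq n]

theorem exists_mul_eq_one_of_rank_eq_card [Fintype m] (M : Matrix m n K)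
    (h : M.rank = Fintype.card n) :
    ∃ L : Matrix n m K, L * M = 1 := by
  rw [← vecMul_surjective_iff_exists_left_inverse]
  have hrange : LinearMap.range Mᵀ.mulVecLin = ⊤ := Submodule.eq_top_of_finrank_eq <| by
    rw [← Matrix.rank, rank_transpose, h, Module.finrank_fintype_fun_eq_card]
  intro y
  obtain ⟨x, hx⟩ := LinearMap.range_eq_top.mp hrange y
  exact ⟨x, by simpa [mulVec_transpose] using hx⟩

theorem exists_eq_mul_of_mul_transpose_eq [Fintype n'] {A : Matrix m n' K} {A' : Matrix m n K}
    {C : Matrix m' n' K} {C' : Matrix m' n K} (hC' : C'.rank = Fintype.card n)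
    (h : A * Cᵀ = A' * C'ᵀ) : ∃ g : Matrix n' n K, A' = A * g := by
  obtain ⟨L, hL⟩ := exists_mul_eq_one_of_rank_eq_card C' hC'
  refine ⟨Cᵀ * Lᵀ, ?_⟩
  calc A' = A' * (L * C')ᵀ := by rw [hL, transpose_one, Matrix.mul_one]
    _ = A * Cᵀ * Lᵀ := by rw [h, transpose_mul, Matrix.mul_assoc]
    _ = A * (Cᵀ * Lᵀ) := Matrix.mul_assoc _ _ _

theorem existsUnique_eq_mul_of_mul_transpose_eq [Fintype m] (A A' : Matrix m n K)
    (C C' : Matrix m' n K)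
    (hA : A.rank = Fintype.card n) (hA' : A'.rank = Fintype.card n)
    (hC : C.rank = Fintype.card n) (hC' : C'.rank = Fintype.card n)
    (h : A * Cᵀ = A' * C'ᵀ) :
    ∃! g : Matrix n n K, IsUnit g ∧ A' = A * g ∧ C' = C * (g⁻¹)ᵀ := by
  obtain ⟨g, hg⟩ := exists_eq_mul_of_mul_transpose_eq hC' h
  obtain ⟨k, hk⟩ := exists_eq_mul_of_mul_transpose_eq hA' <| by
    simpa only [transpose_mul, transpose_transpose] using congrArg transpose h
  obtain ⟨LA, hLA⟩ := exists_mul_eq_one_of_rank_eq_card A hA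
  obtain ⟨LC, hLC⟩ := exists_mul_eq_one_of_rank_eq_card C hC
  have hgk : g * kᵀ = 1 :=
    calc g * kᵀ = LA * A * g * kᵀ * (LC * C)ᵀ := by
          rw [hLA, hLC, transpose_one, Matrix.one_mul, Matrix.mul_one]
      _ = LA * (A * g) * (C * k)ᵀ * LCᵀ := by simp only [transpose_mul, Matrix.mul_assoc]
      _ = LA * (A * Cᵀ) * LCᵀ := by rw [← hg, ← hk, Matrix.mul_assoc LA A', ← h]
      _ = LA * A * (LC * C)ᵀ := by simp only [transpose_mul, Matrix.mul_assoc]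
      _ = 1 := by rw [hLA, hLC, transpose_one, Matrix.mul_one]
  refine ⟨g, ⟨isUnit_iff_exists_inv.mpr ⟨kᵀ, hgk⟩, hg, ?_⟩, ?_⟩
  · rw [inv_eq_right_inv hgk, transpose_transpose, hk]
  · rintro g' ⟨-, hg', -⟩
    exact mul_right_injective_of_inv LA A hLA (hg'.symm.trans hg)

end Matrix

theorem stmt_8_general (n₁ n₂ p q : ℕ)
    (A A' : Matrix (Fin p) (Fin n₁) ℂ) (B B' : Matrix (Fin p) (Fin n₂) ℂ)
    (C C' : Matrix (Fin q) (Fin n₁) ℂ) (D D' : Matrix (Fin q) (Fin n₂) ℂ)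
    (hA : A.rank = n₁) (hA' : A'.rank = n₁) (hC : C.rank = n₁) (hC' : C'.rank = n₁)
    (hB : B.rank = n₂) (hB' : B'.rank = n₂) (hD : D.rank = n₂) (hD' : D'.rank = n₂)
    (hAC : A * Cᵀ = A' * C'ᵀ) (hDB : D * Bᵀ = D' * B'ᵀ) :
    ∃! gh : Matrix (Fin n₁) (Fin n₁) ℂ × Matrix (Fin n₂) (Fin n₂) ℂ,
      IsUnit gh.1 ∧ IsUnit gh.2 ∧
      A' = A * gh.1 ∧ C' = C * (gh.1⁻¹)ᵀ ∧
      B' = B * gh.2 ∧ D' = D * (gh.2⁻¹)ᵀ := by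
  have hBD : B * Dᵀ = B' * D'ᵀ := by
    simpa only [transpose_mul, transpose_transpose] using congrArg transpose hDB
  obtain ⟨g, ⟨hg, hA'g, hC'g⟩, hg_unique⟩ :=
    existsUnique_eq_mul_of_mul_transpose_eq A A' C C'
      (by simpa) (by simpa) (by simpa) (by simpa) hAC
  obtain ⟨h, ⟨hh, hB'h, hD'h⟩, hh_unique⟩ :=
    existsUnique_eq_mul_of_mul_transpose_eq B B' D D'
      (by simpa) (by simpa) (by simpa) (by simpa) hBD
  refine ⟨(g, h), ⟨hg, hh, hA'g, hC'g, hB'h, hD'h⟩, ?_⟩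
  rintro ⟨g', h'⟩ ⟨hg', hh', hA'g', hC'g', hB'h', hD'h'⟩
  exact Prod.ext (hg_unique g' ⟨hg', hA'g', hC'g'⟩) (hh_unique h' ⟨hh', hB'h', hD'h'⟩)

/-- Lemma B.2(ii) for the dual pair (U(n₁,n₂), U(p,q)):
the fiber of φ'(A,B,C,D) = (A·Cᵀ, D·Bᵀ) over a full-rank point is a single
free orbit of K_ℂ = GL(n₁,ℂ) × GL(n₂,ℂ), acting by
(g,h)·(A,B,C,D) = (A·g, B·h, C·(g⁻¹)ᵀ, D·(h⁻¹)ᵀ). -/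
theorem stmt_8 (n₁ n₂ p q : ℕ) (hn₁ : 0 < n₁) (hn₂ : 0 < n₂) (hp : 0 < p) (hq : 0 < q)
    (hsp : n₁ + n₂ ≤ p) (hsq : n₁ + n₂ ≤ q)
    (A A' : Matrix (Fin p) (Fin n₁) ℂ) (B B' : Matrix (Fin p) (Fin n₂) ℂ)
    (C C' : Matrix (Fin q) (Fin n₁) ℂ) (D D' : Matrix (Fin q) (Fin n₂) ℂ)
    (hA : A.rank = n₁) (hA' : A'.rank = n₁) (hC : C.rank = n₁) (hC' : C'.rank = n₁)
    (hB : B.rank = n₂) (hB' : B'.rank = n₂) (hD : D.rank = n₂) (hD' : D'.rank = n₂)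
    (hAC : A * Cᵀ = A' * C'ᵀ) (hDB : D * Bᵀ = D' * B'ᵀ) :
    ∃! gh : Matrix (Fin n₁) (Fin n₁) ℂ × Matrix (Fin n₂) (Fin n₂) ℂ,
      IsUnit gh.1 ∧ IsUnit gh.2 ∧
      A' = A * gh.1 ∧ C' = C * (gh.1⁻¹)ᵀ ∧
      B' = B * gh.2 ∧ D' = D * (gh.2⁻¹)ᵀ :=
  stmt_8_general n₁ n₂ p q A A' B B' C C' D D' hA hA' hC hC' hB hB' hD hD' hAC hDB
end

section
/- Let n and p be positive integers with 2n ≤ p, and let J_{2n} denote the 2n×2n block matrix [[0, I_n], [-I_n, 0]]. Suppose A, A' are complex p×2n matrices of rank 2n with A·J_{2n}·Aᵀ = A'·J_{2n}·A'ᵀ. Then there exists a unique invertible 2n×2n complex matrix g with g·J_{2n}·gᵀ = J_{2n} (i.e. g ∈ Sp(2n,ℂ)) such that A' = A·g. -/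
/-!
A matrix of full column rank has a left inverse `B`, so `A` cancels on the left and `Aᵀ` on the
right. From `A J Aᵀ = A' J A'ᵀ` and `B' A' = 1` one reads off `A' = A g` with
`g = J Aᵀ B'ᵀ J⁻¹`; then `A (g J gᵀ) Aᵀ = A J Aᵀ` and cancellation give `g J gᵀ = J`, so
`(det g)² = 1`. Uniqueness of `g` is left cancellation of `A`.
-/

open Matrix

namespace Matrix

section Field

variable {K : Type*} [Field K] {m n : Type*} [Fintype m] [Fintype n] [DecidableEq n]

theorem exists_mul_eq_one_of_rank_eq_card_s12 {A : Matrix m n K} (hA : A.rank = Fintype.card n) :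
    ∃ B : Matrix n m K, B * A = 1 := by
  have hrange : LinearMap.range Aᵀ.mulVecLin = ⊤ := by
    apply Submodule.eq_top_of_finrank_eq
    rw [Module.finrank_fintype_fun_eq_card, ← hA, ← rank_transpose]
    rfl
  obtain ⟨C, hC⟩ := mulVec_surjective_iff_exists_right_inverse.mp
    (LinearMap.range_eq_top.mp hrange)
  exact ⟨Cᵀ, by rw [← transpose_transpose A, ← transpose_mul, hC, transpose_one]⟩

end Field

section CommRing

variable {R : Type*} [CommRing R] {m n : Type*} [Fintype m] [Fintype n] [DecidableEq n]

theorem eq_of_mul_mul_transpose_eq {A : Matrix m n R} {B : Matrix n m R} (hBA : B * A = 1)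
    {X Y : Matrix n n R} (h : A * X * Aᵀ = A * Y * Aᵀ) : X = Y := by
  have hAB : Aᵀ * Bᵀ = 1 := by rw [← transpose_mul, hBA, transpose_one]
  have hcancel (Z : Matrix n n R) : B * (A * Z * Aᵀ) * Bᵀ = Z := by
    rw [← Matrix.mul_assoc, ← Matrix.mul_assoc, hBA, Matrix.one_mul, Matrix.mul_assoc, hAB,
      Matrix.mul_one]
  simpa only [hcancel] using congrArg (fun M => B * M * Bᵀ) h

theorem eq_mul_of_mul_mul_transpose_eq {J : Matrix n n R} (hJ : IsUnit J.det)
    {A A' : Matrix m n R} {B' : Matrix n m R} (hB' : B' * A' = 1)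
    (h : A * J * Aᵀ = A' * J * A'ᵀ) : A' = A * (J * Aᵀ * B'ᵀ * J⁻¹) := by
  have hAB' : A'ᵀ * B'ᵀ = 1 := by rw [← transpose_mul, hB', transpose_one]
  calc A' = A' * J * (A'ᵀ * B'ᵀ) * J⁻¹ := by
        rw [hAB', Matrix.mul_one, Matrix.mul_assoc, mul_nonsing_inv J hJ, Matrix.mul_one]
    _ = A * (J * Aᵀ * B'ᵀ * J⁻¹) := by simp only [← Matrix.mul_assoc, ← h]

theorem isUnit_of_mul_mul_transpose_eq_self {J g : Matrix n n R} (hJ : IsUnit J.det)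
    (hg : g * J * gᵀ = J) : IsUnit g := by
  have hdet : J.det * (g.det * g.det) = J.det * 1 := by
    have := congrArg det hg
    rw [det_mul, det_mul, det_transpose] at this
    linear_combination this
  rw [isUnit_iff_isUnit_det]
  exact IsUnit.of_mul_eq_one _ (hJ.mul_left_cancel hdet)

theorem existsUnique_eq_mul_of_mul_mul_transpose_eq {J : Matrix n n R} (hJ : IsUnit J.det)
    {A A' : Matrix m n R} {B B' : Matrix n m R} (hB : B * A = 1) (hB' : B' * A' = 1)
    (h : A * J * Aᵀ = A' * J * A'ᵀ) :
    ∃! g : Matrix n n R, IsUnit g ∧ g * J * gᵀ = J ∧ A' = A * g := by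
  obtain ⟨g, hA'⟩ : ∃ g, A' = A * g := ⟨_, eq_mul_of_mul_mul_transpose_eq hJ hB' h⟩
  have hg : g * J * gᵀ = J := by
    refine eq_of_mul_mul_transpose_eq hB ?_
    rw [h, hA', transpose_mul A g]
    simp only [Matrix.mul_assoc]
  refine ⟨g, ⟨isUnit_of_mul_mul_transpose_eq_self hJ hg, hg, hA'⟩, ?_⟩
  rintro g' ⟨-, -, hg'⟩
  exact (mul_right_injective_of_inv B A hB).eq_iff.mp (hg'.symm.trans hA')

theorem isUnit_det_fromBlocks_zero_one_neg_one (l : Type*) [Fintype l] [DecidableEq l] :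
    IsUnit (fromBlocks 0 1 (-1) 0 : Matrix (l ⊕ l) (l ⊕ l) R).det := by
  have hJ : (fromBlocks 0 1 (-1) 0 : Matrix (l ⊕ l) (l ⊕ l) R) = -J l R := by
    rw [J, fromBlocks_neg, neg_zero, neg_neg]
  rw [hJ, det_neg]
  exact (isUnit_neg_one.pow _).mul (IsUnit.of_mul_eq_one _ (J_det_mul_J_det l R))

end CommRing

end Matrix

theorem stmt_12_general (n p : ℕ)
    (J : Matrix (Fin n ⊕ Fin n) (Fin n ⊕ Fin n) ℂ)
    (hJ : J = Matrix.fromBlocks 0 1 (-1) 0)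
    (A A' : Matrix (Fin p) (Fin n ⊕ Fin n) ℂ)
    (hA : A.rank = 2 * n) (hA' : A'.rank = 2 * n)
    (h : A * J * Aᵀ = A' * J * A'ᵀ) :
    ∃! g : Matrix (Fin n ⊕ Fin n) (Fin n ⊕ Fin n) ℂ,
      IsUnit g ∧ g * J * gᵀ = J ∧ A' = A * g := by
  have hcard : Fintype.card (Fin n ⊕ Fin n) = 2 * n := by simp [two_mul]
  obtain ⟨B, hB⟩ := exists_mul_eq_one_of_rank_eq_card_s12 (hA.trans hcard.symm)
  obtain ⟨B', hB'⟩ := exists_mul_eq_one_of_rank_eq_card_s12 (hA'.trans hcard.symm)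
  exact existsUnique_eq_mul_of_mul_mul_transpose_eq
    (hJ ▸ isUnit_det_fromBlocks_zero_one_neg_one (Fin n)) hB hB' h

/-- Lemma B.2(ii) for the complex dual pair (Sp(2n,ℂ), O(p,ℂ)):
the fiber of φ'(A) = A·J_{2n}·Aᵀ over a full-rank point is a single free
orbit of K_ℂ = Sp(2n,ℂ) acting by g·A = A·g.  Here
J_{2n} = [[0, I_n], [-I_n, 0]] with the 2n indices realized by
`Fin n ⊕ Fin n`. -/
theorem stmt_12 (n p : ℕ) (hn : 0 < n) (hp : 0 < p) (hnp : 2 * n ≤ p)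
    (J : Matrix (Fin n ⊕ Fin n) (Fin n ⊕ Fin n) ℂ)
    (hJ : J = Matrix.fromBlocks 0 1 (-1) 0)
    (A A' : Matrix (Fin p) (Fin n ⊕ Fin n) ℂ)
    (hA : A.rank = 2 * n) (hA' : A'.rank = 2 * n)
    (h : A * J * Aᵀ = A' * J * A'ᵀ) :
    ∃! g : Matrix (Fin n ⊕ Fin n) (Fin n ⊕ Fin n) ℂ,
      IsUnit g ∧ g * J * gᵀ = J ∧ A' = A * g :=
  stmt_12_general n p J hJ A A' hA hA' h
end
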